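/- Let F = u vᵀ − v uᵀ be a decomposable real antisymmetric 4×4 matrix of unit norm such that both the Kähler form and Im Ω vanish on the plane spanned by u and v (a special Lagrangian plane): ⟨ω, F⟩ = 0 and ⟨Im Ω, F⟩ = 0. Then the plane span{u, v} is a complex line with respect to the complex structure J̃ determined by Re Ω, i.e. it is invariant under the matrix J̃ with rows (0,0,−1,0), (0,0,0,1), (1,0,0,0), (0,−1,0,0): the special Lagrangian planes with respect to (ω, Ω) coincide with the complex planes for J̃ = Re Ω. -/

import Mathlib

/-!
For a decomposable `F = u ∧ v` the Plücker relation `F₁₂F₃₄ − F₁₃F₂₄ + F₁₄F₂₃ = 0` gives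
`⟨ω, F⟩² + ⟨Re Ω, F⟩² + ⟨Im Ω, F⟩² = |F|²`, and `|F|²` is the Gram determinant of `u, v`.
On a special Lagrangian plane this forces `⟨J̃u, v⟩² = ⟨Re Ω, F⟩² = |u|²|v|² − ⟨u, v⟩²`.
Since `J̃u ⊥ u` and `|J̃u| = |u|`, this is the equality case of Bessel's inequality for the
projection of `J̃u` onto `span{u, v}`, so `J̃u` lies in that plane; likewise `J̃v`.
-/

open Matrix

/-- The Hodge star operator on (antisymmetric) real 4×4 matrices, determined by
`(⋆F)₁₂ = F₃₄`, `(⋆F)₁₃ = −F₂₄`, `(⋆F)₁₄ = F₂₃`, `(⋆F)₂₃ = F₁₄`,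
`(⋆F)₂₄ = −F₁₃`, `(⋆F)₃₄ = F₁₂` (indices here are 1-based). -/
def hodge (F : Matrix (Fin 4) (Fin 4) ℝ) : Matrix (Fin 4) (Fin 4) ℝ :=
  !![0, F 2 3, -(F 1 3), F 1 2;
     -(F 2 3), 0, F 0 3, -(F 0 2);
     F 1 3, -(F 0 3), 0, F 0 1;
     -(F 1 2), F 0 2, -(F 0 1), 0]

/-- The inner product `⟨F,G⟩ = Σ_{i<j} F_{ij} G_{ij}` on 4×4 matrices. -/
def inner2 (F G : Matrix (Fin 4) (Fin 4) ℝ) : ℝ :=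
  ∑ i : Fin 4, ∑ j : Fin 4, if i < j then F i j * G i j else 0

/-- The projection `P₊ = ½(1 + ⋆)` onto self-dual matrices. -/
noncomputable def Pplus (F : Matrix (Fin 4) (Fin 4) ℝ) : Matrix (Fin 4) (Fin 4) ℝ :=
  (1/2 : ℝ) • (F + hodge F)

/-- The projection `P₋ = ½(1 − ⋆)` onto anti-self-dual matrices. -/
noncomputable def Pminus (F : Matrix (Fin 4) (Fin 4) ℝ) : Matrix (Fin 4) (Fin 4) ℝ :=
  (1/2 : ℝ) • (F - hodge F)

theorem mem_span_pair_of_sq_dotProduct_eq {ι : Type*} [Fintype ι] {u v w : ι → ℝ}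
    (hwu : w ⬝ᵥ u = 0) (hG : (u ⬝ᵥ u) * (v ⬝ᵥ v) - (u ⬝ᵥ v) ^ 2 ≠ 0)
    (h : (w ⬝ᵥ v) ^ 2 * (u ⬝ᵥ u) = ((u ⬝ᵥ u) * (v ⬝ᵥ v) - (u ⬝ᵥ v) ^ 2) * (w ⬝ᵥ w)) :
    w ∈ Submodule.span ℝ {u, v} := by
  set G := (u ⬝ᵥ u) * (v ⬝ᵥ v) - (u ⬝ᵥ v) ^ 2
  set c := w ⬝ᵥ v
  set r := G • w - c • ((u ⬝ᵥ u) • v - (u ⬝ᵥ v) • u)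
  have hr : r ⬝ᵥ r = G * (G * (w ⬝ᵥ w) - c ^ 2 * (u ⬝ᵥ u)) := by
    simp only [r, dotProduct_sub, sub_dotProduct, dotProduct_smul, smul_dotProduct, smul_eq_mul,
      dotProduct_comm v u, dotProduct_comm v w, dotProduct_comm u w, hwu]
    ring
  have hGw : G • w = c • ((u ⬝ᵥ u) • v - (u ⬝ᵥ v) • u) :=
    sub_eq_zero.mp (dotProduct_self_eq_zero.mp (by rw [hr, ← h]; ring))
  rw [Submodule.mem_span_pair]
  refine ⟨-(G⁻¹ * c * (u ⬝ᵥ v)), G⁻¹ * c * (u ⬝ᵥ u), ?_⟩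
  rw [← inv_smul_smul₀ hG w, hGw]
  module

theorem inner2_eq (F G : Matrix (Fin 4) (Fin 4) ℝ) :
    inner2 F G = F 0 1 * G 0 1 + F 0 2 * G 0 2 + F 0 3 * G 0 3 + F 1 2 * G 1 2 +
      F 1 3 * G 1 3 + F 2 3 * G 2 3 := by
  simp [inner2, Fin.sum_univ_four, add_assoc]

def kaehlerForm : Matrix (Fin 4) (Fin 4) ℝ :=
  !![0, 1, 0, 0; -1, 0, 0, 0; 0, 0, 0, 1; 0, 0, -1, 0]

def reOmega : Matrix (Fin 4) (Fin 4) ℝ :=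
  !![0, 0, 1, 0; 0, 0, 0, -1; -1, 0, 0, 0; 0, 1, 0, 0]

def imOmega : Matrix (Fin 4) (Fin 4) ℝ :=
  !![0, 0, 0, 1; 0, 0, 1, 0; 0, -1, 0, 0; -1, 0, 0, 0]

def reOmegaComplexStructure : Matrix (Fin 4) (Fin 4) ℝ :=
  !![0, 0, -1, 0; 0, 0, 0, 1; 1, 0, 0, 0; 0, -1, 0, 0]

local notation "J̃" => reOmegaComplexStructure

section Wedge

variable (u v : Fin 4 → ℝ)

theorem inner2_wedge_self :
    inner2 (vecMulVec u v - vecMulVec v u) (vecMulVec u v - vecMulVec v u) =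
      (u ⬝ᵥ u) * (v ⬝ᵥ v) - (u ⬝ᵥ v) ^ 2 := by
  simp only [inner2_eq, Matrix.sub_apply, vecMulVec_apply, dotProduct, Fin.sum_univ_four]
  ring

theorem sq_inner2_kaehlerForm_add_sq_reOmega_add_sq_imOmega :
    inner2 kaehlerForm (vecMulVec u v - vecMulVec v u) ^ 2 +
        inner2 reOmega (vecMulVec u v - vecMulVec v u) ^ 2 +
        inner2 imOmega (vecMulVec u v - vecMulVec v u) ^ 2 =
      inner2 (vecMulVec u v - vecMulVec v u) (vecMulVec u v - vecMulVec v u) := by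
  simp only [inner2_eq, kaehlerForm, reOmega, imOmega, Matrix.sub_apply, vecMulVec_apply,
    of_apply, cons_val', cons_val_zero, cons_val_one, cons_val, cons_val_fin_one]
  ring

theorem reOmegaComplexStructure_mulVec_dotProduct :
    J̃ *ᵥ u ⬝ᵥ v = inner2 reOmega (vecMulVec u v - vecMulVec v u) := by
  simp only [inner2_eq, reOmega, reOmegaComplexStructure, Matrix.sub_apply, vecMulVec_apply,
    dotProduct, mulVec, Fin.sum_univ_four, of_apply, cons_val', cons_val_zero, cons_val_one,
    cons_val, cons_val_fin_one]
  ring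

theorem reOmegaComplexStructure_mulVec_dotProduct_swap :
    J̃ *ᵥ v ⬝ᵥ u = -(J̃ *ᵥ u ⬝ᵥ v) := by
  simp only [reOmegaComplexStructure, dotProduct, mulVec, Fin.sum_univ_four, of_apply, cons_val',
    cons_val_zero, cons_val_one, cons_val, cons_val_fin_one]
  ring

theorem reOmegaComplexStructure_mulVec_dotProduct_self : J̃ *ᵥ u ⬝ᵥ u = 0 := by
  linarith [reOmegaComplexStructure_mulVec_dotProduct_swap u u]

theorem reOmegaComplexStructure_mulVec_dotProduct_mulVec : J̃ *ᵥ u ⬝ᵥ J̃ *ᵥ u = u ⬝ᵥ u := by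
  simp only [reOmegaComplexStructure, dotProduct, mulVec, Fin.sum_univ_four, of_apply, cons_val',
    cons_val_zero, cons_val_one, cons_val, cons_val_fin_one]
  ring

end Wedge

/-- if `F = uvᵀ − vuᵀ` is decomposable of unit norm and both the Kähler
form `ω = dx¹∧dx² + dx³∧dx⁴` and `Im Ω = dx¹∧dx⁴ + dx²∧dx³` vanish on the plane
`span{u,v}` (a special Lagrangian plane), then this plane is invariant under the
complex structure `J̃` determined by `Re Ω`: special Lagrangian planes for `(ω, Ω)`
are exactly complex planes for `J̃ = Re Ω`. -/
theorem stmt_9 (u v : Fin 4 → ℝ) (F : Matrix (Fin 4) (Fin 4) ℝ)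
    (hF : F = Matrix.vecMulVec u v - Matrix.vecMulVec v u)
    (hnorm : inner2 F F = 1)
    (homega : inner2 !![0, 1, 0, 0;
                        -1, 0, 0, 0;
                        0, 0, 0, 1;
                        0, 0, -1, 0] F = 0)
    (hImOmega : inner2 !![0, 0, 0, 1;
                          0, 0, 1, 0;
                          0, -1, 0, 0;
                          -1, 0, 0, 0] F = 0) :
    (!![0, 0, -1, 0;
        0, 0, 0, 1;
        1, 0, 0, 0;
        0, -1, 0, 0] : Matrix (Fin 4) (Fin 4) ℝ) *ᵥ u ∈ Submodule.span ℝ {u, v} ∧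
    (!![0, 0, -1, 0;
        0, 0, 0, 1;
        1, 0, 0, 0;
        0, -1, 0, 0] : Matrix (Fin 4) (Fin 4) ℝ) *ᵥ v ∈ Submodule.span ℝ {u, v} := by
  change J̃ *ᵥ u ∈ _ ∧ J̃ *ᵥ v ∈ _
  change inner2 kaehlerForm F = 0 at homega
  change inner2 imOmega F = 0 at hImOmega
  subst hF
  have hgram : (u ⬝ᵥ u) * (v ⬝ᵥ v) - (u ⬝ᵥ v) ^ 2 = 1 := by rw [← inner2_wedge_self, hnorm]
  have hJuv : (J̃ *ᵥ u ⬝ᵥ v) ^ 2 = 1 := by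
    rw [reOmegaComplexStructure_mulVec_dotProduct, ← hnorm,
      ← sq_inner2_kaehlerForm_add_sq_reOmega_add_sq_imOmega, homega, hImOmega]
    ring
  constructor
  · refine mem_span_pair_of_sq_dotProduct_eq (reOmegaComplexStructure_mulVec_dotProduct_self u)
      (by rw [hgram]; exact one_ne_zero) ?_
    rw [hgram, hJuv, reOmegaComplexStructure_mulVec_dotProduct_mulVec, one_mul]
  · rw [Set.pair_comm]
    refine mem_span_pair_of_sq_dotProduct_eq (reOmegaComplexStructure_mulVec_dotProduct_self v)
      (by rw [dotProduct_comm v u]; linarith) ?_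
    rw [reOmegaComplexStructure_mulVec_dotProduct_swap, neg_sq, hJuv,
      reOmegaComplexStructure_mulVec_dotProduct_mulVec, dotProduct_comm v u]
    linear_combination -(v ⬝ᵥ v) * hgram
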